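/- arXiv:1407.5818 — 3 statements merged into one kernel-verified Lean document; each statement's English description precedes it below -/
import Mathlib

section
/- Let G be a graph on n vertices with minimum degree δ ≥ 1 and largest Laplacian eigenvalue σ_{n−1}. Then the chromatic number satisfies χ(G) ≥ σ_{n−1}/(σ_{n−1} − δ). -/
/-!
Color the graph with `k = χ(G)` colors; some color class `S` has at least `n / k` vertices.
Bound the Rayleigh quotient of the Laplacian at the centered indicator `x = 1_S - (|S| / n) 𝟙`
by `σ_{n-1}`. Since `L 𝟙 = 0` and `S` is independent, `xᵀ L x = 1_Sᵀ L 1_S = ∑_{v ∈ S} deg v`,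
which is at least `|S| δ`, while `xᵀ x = |S| (1 - |S| / n)`. Hence
`δ ≤ σ_{n-1} (1 - |S| / n) ≤ σ_{n-1} (1 - 1 / k)`, which rearranges to the bound.
-/

open Finset

noncomputable section

/-- The Laplacian eigenvalues of a graph on `Fin n`, sorted in ascending order. -/
def lapEig {n : ℕ} (G : SimpleGraph (Fin n)) [DecidableRel G.Adj] : Fin n → ℝ :=
  let h : (G.lapMatrix ℝ).IsHermitian := (SimpleGraph.posSemidef_lapMatrix ℝ G).1
  h.eigenvalues ∘ Tuple.sort h.eigenvalues

/-- The average degree of a graph on `Fin n`. -/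
def avgDeg {n : ℕ} (G : SimpleGraph (Fin n)) [DecidableRel G.Adj] : ℝ :=
  (∑ v, (G.degree v : ℝ)) / n

open Matrix
open scoped ComplexOrder

namespace Matrix.IsHermitian

variable {n : Type*} [Fintype n] [DecidableEq n]

lemma posSemidef_smul_one_sub {𝕜 : Type*} [RCLike 𝕜] {A : Matrix n n 𝕜} (hA : A.IsHermitian)
    {M : ℝ} (hM : ∀ i, hA.eigenvalues i ≤ M) :
    ((M : 𝕜) • 1 - A).PosSemidef := by
  set U : Matrix n n 𝕜 := (hA.eigenvectorUnitary : Matrix n n 𝕜)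
  have hUU : U * star U = 1 := Unitary.mul_star_self_of_mem hA.eigenvectorUnitary.2
  have hdiag : diagonal (fun i => ((M - hA.eigenvalues i : ℝ) : 𝕜))
      = (M : 𝕜) • 1 - diagonal (RCLike.ofReal ∘ hA.eigenvalues) := by
    ext i j
    by_cases h : i = j <;> simp [h, diagonal, Algebra.algebraMap_eq_smul_one, sub_smul]
  have hconj :
      (M : 𝕜) • 1 - A = U * diagonal (fun i => ((M - hA.eigenvalues i : ℝ) : 𝕜)) * star U := by
    conv_lhs => rw [hA.spectral_theorem, Unitary.conjStarAlgAut_apply]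
    rw [hdiag, mul_sub, sub_mul, mul_smul_comm, mul_one, smul_mul_assoc, hUU]
  rw [hconj, Unitary.isUnit_coe.posSemidef_star_right_conjugate_iff, posSemidef_diagonal_iff]
  exact fun i => mod_cast sub_nonneg.mpr (hM i)

lemma dotProduct_mulVec_le {A : Matrix n n ℝ} (hA : A.IsHermitian) {M : ℝ}
    (hM : ∀ i, hA.eigenvalues i ≤ M) (x : n → ℝ) : x ⬝ᵥ (A *ᵥ x) ≤ M * (x ⬝ᵥ x) := by
  simpa [sub_mulVec, smul_mulVec, dotProduct_sub, dotProduct_smul] using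
    (hA.posSemidef_smul_one_sub hM).dotProduct_mulVec_nonneg x

end Matrix.IsHermitian

lemma Finset.indicator_sub_const_dotProduct_self {V : Type*} [Fintype V] (S : Finset V)
    (c : ℝ) :
    ((S : Set V).indicator 1 - fun _ => c) ⬝ᵥ ((S : Set V).indicator 1 - fun _ => c)
      = #S * (1 - 2 * c) + Fintype.card V * c ^ 2 := by
  classical
  have hsq : ∀ i, ((S : Set V).indicator (1 : V → ℝ) i - c) * ((S : Set V).indicator 1 i - c)
      = (if i ∈ S then 1 - 2 * c else 0) + c ^ 2 := by
    intro i
    by_cases hi : i ∈ S <;> simp [hi] <;> ring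
  simp only [dotProduct, Pi.sub_apply, hsq, sum_add_distrib, sum_ite_mem, univ_inter, sum_const,
    card_univ, nsmul_eq_mul]

namespace SimpleGraph

variable {V : Type*} [Fintype V] [DecidableEq V] (G : SimpleGraph V) [DecidableRel G.Adj]

lemma dotProduct_lapMatrix_mulVec_sub_const {R : Type*} [Field R] [CharZero R] (x : V → R)
    (c : R) :
    (x - fun _ => c) ⬝ᵥ (G.lapMatrix R *ᵥ (x - fun _ => c)) = x ⬝ᵥ (G.lapMatrix R *ᵥ x) := by
  simp only [← toLinearMap₂'_apply', lapMatrix_toLinearMap₂', Pi.sub_apply,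
    sub_sub_sub_cancel_right]

lemma indicator_dotProduct_lapMatrix_mulVec_of_isIndepSet {S : Finset V} (hS : G.IsIndepSet S) :
    (S : Set V).indicator 1 ⬝ᵥ (G.lapMatrix ℝ *ᵥ (S : Set V).indicator 1)
      = ∑ i ∈ S, (G.degree i : ℝ) := by
  have hdiag : ∀ i, (G.degree i : ℝ) * (S : Set V).indicator 1 i * (S : Set V).indicator 1 i
      = if i ∈ S then (G.degree i : ℝ) else 0 := by
    intro i
    by_cases hi : i ∈ S <;> simp [hi]
  have hcross : ∀ i j, (if G.Adj i j then
      (S : Set V).indicator (1 : V → ℝ) i * (S : Set V).indicator 1 j else 0) = 0 := by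
    intro i j
    by_cases hi : i ∈ S <;> by_cases hj : j ∈ S <;> simp [hi, hj]
    exact fun hij => hS hi hj hij.ne hij
  rw [lapMatrix, sub_mulVec, dotProduct_sub, dotProduct_mulVec_degMatrix,
    dotProduct_mulVec_adjMatrix]
  simp only [hdiag, hcross, sum_const_zero, sub_zero, sum_ite_mem, univ_inter]

lemma sum_degree_le_of_isIndepSet {S : Finset V} (hS : G.IsIndepSet S) {M : ℝ}
    (hM : ∀ i, (G.isHermitian_lapMatrix ℝ).eigenvalues i ≤ M) :
    ∑ i ∈ S, (G.degree i : ℝ) ≤ M * (#S * (1 - #S / Fintype.card V)) := by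
  rcases S.eq_empty_or_nonempty with rfl | hne
  · simp
  set c : ℝ := #S / Fintype.card V
  have hnc : Fintype.card V * c = #S :=
    mul_div_cancel₀ _ (by have := hne.to_type; exact_mod_cast Fintype.card_ne_zero)
  set x : V → ℝ := (S : Set V).indicator 1 - fun _ => c with hx
  calc ∑ i ∈ S, (G.degree i : ℝ) = x ⬝ᵥ (G.lapMatrix ℝ *ᵥ x) := by
        rw [hx, dotProduct_lapMatrix_mulVec_sub_const,
          indicator_dotProduct_lapMatrix_mulVec_of_isIndepSet G hS]
    _ ≤ M * (x ⬝ᵥ x) := (G.isHermitian_lapMatrix ℝ).dotProduct_mulVec_le hM x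
    _ = M * (#S * (1 - c)) := by
        rw [hx, S.indicator_sub_const_dotProduct_self, sq, ← mul_assoc, hnc]
        ring

lemma card_mul_le_of_isIndepSet {S : Finset V} (hS : G.IsIndepSet S) (hne : S.Nonempty) {M : ℝ}
    (hM : ∀ i, (G.isHermitian_lapMatrix ℝ).eigenvalues i ≤ M) :
    #S * M ≤ Fintype.card V * (M - G.minDegree) := by
  have hs : (0 : ℝ) < #S := by exact_mod_cast hne.card_pos
  have hn : (0 : ℝ) < Fintype.card V := by have := hne.to_type; exact_mod_cast Fintype.card_pos
  have hδ : #S * (G.minDegree : ℝ) ≤ ∑ i ∈ S, (G.degree i : ℝ) := by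
    simpa using sum_le_sum fun i (_ : i ∈ S) =>
      (Nat.cast_le (α := ℝ)).mpr (G.minDegree_le_degree i)
  have h := hδ.trans (G.sum_degree_le_of_isIndepSet hS hM)
  rw [mul_left_comm] at h
  have hδM := mul_le_mul_of_nonneg_left (le_of_mul_le_mul_left h hs) hn.le
  have hdiv : (#S : ℝ) / Fintype.card V * Fintype.card V = #S := div_mul_cancel₀ _ hn.ne'
  linear_combination hδM - M * hdiv

end SimpleGraph

lemma eigenvalues_le_lapEig_last {n : ℕ} (G : SimpleGraph (Fin n)) [DecidableRel G.Adj]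
    (h : n - 1 < n) (i : Fin n) :
    (G.isHermitian_lapMatrix ℝ).eigenvalues i ≤ lapEig G ⟨n - 1, h⟩ := by
  set σ := Tuple.sort (G.isHermitian_lapMatrix ℝ).eigenvalues
  have hi : σ.symm i ≤ ⟨n - 1, h⟩ := Fin.le_def.mpr (Nat.le_sub_one_of_lt (σ.symm i).isLt)
  calc (G.isHermitian_lapMatrix ℝ).eigenvalues i = lapEig G (σ.symm i) := by simp [lapEig, σ]
    _ ≤ lapEig G ⟨n - 1, h⟩ := Tuple.monotone_sort (G.isHermitian_lapMatrix ℝ).eigenvalues hi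

theorem chromatic_lower_bound {n : ℕ} (hn : 0 < n) (G : SimpleGraph (Fin n))
    [DecidableRel G.Adj] (hδ : 1 ≤ G.minDegree) :
    lapEig G ⟨n - 1, by omega⟩ / (lapEig G ⟨n - 1, by omega⟩ - G.minDegree)
      ≤ (G.chromaticNumber.toNat : ℝ) := by
  obtain ⟨C⟩ := G.colorable_chromaticNumber_of_fintype
  set k := G.chromaticNumber.toNat
  set σ := lapEig G ⟨n - 1, by omega⟩
  have : Nonempty (Fin k) := ⟨C ⟨0, hn⟩⟩
  have hk : (0 : ℝ) < k := by exact_mod_cast Fin.pos'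
  obtain ⟨c, hc⟩ := Fintype.exists_le_card_fiber_of_nsmul_le_card C (b := (n : ℝ) / k)
    (by simp [nsmul_eq_mul, mul_div_cancel₀ _ hk.ne'])
  set S : Finset (Fin n) := {v | C v = c}
  have hS : G.IsIndepSet S := by
    simp only [S, coe_filter, mem_univ, true_and]
    exact C.isIndepSet_colorClass c
  have hs : (0 : ℝ) < #S := lt_of_lt_of_le (by positivity) hc
  have hbound : #S * σ ≤ n * (σ - G.minDegree) := by
    simpa using G.card_mul_le_of_isIndepSet hS (card_pos.mp (by exact_mod_cast hs))
      (eigenvalues_le_lapEig_last G (by omega))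
  have hsn : (#S : ℝ) ≤ n := by exact_mod_cast (card_le_univ S).trans (Fintype.card_fin n).le
  have hδ' : (1 : ℝ) ≤ G.minDegree := by exact_mod_cast hδ
  -- `(n - |S|) σ ≥ n δ > 0` forces `σ > 0`, and then `n (σ - δ) ≥ |S| σ > 0`.
  have hgap : 0 < σ - G.minDegree := by nlinarith
  have hnk : (n : ℝ) ≤ k * #S := (div_le_iff₀' hk).mp hc
  rw [div_le_iff₀ hgap]
  nlinarith
end
end

section
/- Let G be a graph on n vertices with average degree d. If every nonzero Laplacian eigenvalue σ_i satisfies |d − σ_i| ≤ θ with θ < d, then the vertex expanding factor satisfies γ(G) ≥ (d² − θ²)/(nθ²). -/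
open Finset

noncomputable section

/-- The neighbourhood of a vertex set `X`: vertices outside `X` adjacent to some vertex of `X`. -/
def nbr {n : ℕ} (G : SimpleGraph (Fin n)) [DecidableRel G.Adj]
    (X : Finset (Fin n)) : Finset (Fin n) :=
  Finset.univ.filter (fun y => y ∉ X ∧ ∃ x ∈ X, G.Adj x y)

/-- `X⁺`, the complement of `X ∪ N(X)`. -/
def plusSet {n : ℕ} (G : SimpleGraph (Fin n)) [DecidableRel G.Adj]
    (X : Finset (Fin n)) : Finset (Fin n) :=
  Finset.univ \ (X ∪ nbr G X)

/-!
This is the expander mixing argument. Let `u` and `v` be the indicator vectors of `X` and `X⁺`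
minus their means, so both are orthogonal to the all-ones vector `𝟙`. As `X` and `X⁺` are disjoint
and have no edges between them, `⟪u, L v⟫ = 0` and `⟪u, v⟫ = -|X||X⁺|/n`. Since `θ < d`, the only
eigenvalue of `L` not controlled by the hypothesis is the simple eigenvalue `0`, whose eigenvector
is a multiple of `𝟙` and so is orthogonal to `u`. Expanding in an orthonormal eigenbasis then gives
`|d⟪u, v⟫ - ⟪u, L v⟫| ≤ θ ‖u‖ ‖v‖`, that is `d²|X||X⁺| ≤ θ² (n - |X|)(n - |X⁺|)`, and the claim
follows by rearranging with `n = |X| + |N(X)| + |X⁺|`.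
-/

open scoped Matrix RealInnerProductSpace

section Spectral

variable {ι E : Type*} [Fintype ι] [NormedAddCommGroup E] [InnerProductSpace ℝ E]
  {T : E →ₗ[ℝ] E} {B : OrthonormalBasis ι ℝ E} {μ : ι → ℝ}

theorem inner_apply_eq_sum_eigenvalues (hB : ∀ i, T (B i) = μ i • B i) (u v : E) :
    ⟪u, T v⟫ = ∑ i, μ i * (⟪B i, u⟫ * ⟪B i, v⟫) := by
  conv_lhs => rw [← B.sum_repr' v]
  simp only [map_sum, map_smul, hB, smul_smul, inner_sum, real_inner_smul_right,
    real_inner_comm u]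
  exact sum_congr rfl fun i _ => by ring

theorem abs_mul_inner_sub_inner_apply_le (hB : ∀ i, T (B i) = μ i • B i) {c θ : ℝ}
    (hθ : 0 ≤ θ) {i₀ : ι} (hμ : ∀ i ≠ i₀, |c - μ i| ≤ θ) {u : E} (hu : ⟪B i₀, u⟫ = 0)
    (v : E) : |c * ⟪u, v⟫ - ⟪u, T v⟫| ≤ θ * (‖u‖ * ‖v‖) := by
  have hexpand : c * ⟪u, v⟫ - ⟪u, T v⟫ = ∑ i, (c - μ i) * (⟪B i, u⟫ * ⟪B i, v⟫) := by
    rw [inner_apply_eq_sum_eigenvalues hB, ← B.sum_inner_mul_inner u v, mul_sum,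
      ← sum_sub_distrib]
    exact sum_congr rfl fun i _ => by rw [real_inner_comm u]; ring
  have hterm : ∀ i, |(c - μ i) * (⟪B i, u⟫ * ⟪B i, v⟫)| ≤ θ * (|⟪B i, u⟫| * |⟪B i, v⟫|) := by
    intro i
    rw [abs_mul, abs_mul]
    rcases eq_or_ne i i₀ with rfl | hi
    · simp [hu]
    · exact mul_le_mul_of_nonneg_right (hμ i hi) (by positivity)
  have hcs : ∑ i, |⟪B i, u⟫| * |⟪B i, v⟫| ≤ ‖u‖ * ‖v‖ := by
    have := Real.sum_mul_le_sqrt_mul_sqrt univ (fun i => |⟪B i, u⟫|) (fun i => |⟪B i, v⟫|)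
    simpa only [sq_abs, B.sum_sq_inner_right, Real.sqrt_sq (norm_nonneg _)] using this
  calc |c * ⟪u, v⟫ - ⟪u, T v⟫|
      ≤ ∑ i, |(c - μ i) * (⟪B i, u⟫ * ⟪B i, v⟫)| := hexpand ▸ abs_sum_le_sum_abs _ _
    _ ≤ ∑ i, θ * (|⟪B i, u⟫| * |⟪B i, v⟫|) := sum_le_sum fun i _ => hterm i
    _ ≤ θ * (‖u‖ * ‖v‖) := by rw [← mul_sum]; exact mul_le_mul_of_nonneg_left hcs hθ

theorem inner_eigenvector_eq_zero_of_inner_ker_eq_zero (hT : T.IsSymmetric)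
    (hB : ∀ i, T (B i) = μ i • B i) {i₀ : ι} (hμ : ∀ i ≠ i₀, μ i ≠ 0) {w : E} (hw : T w = 0)
    (hw₀ : w ≠ 0) {u : E} (hu : ⟪w, u⟫ = 0) : ⟪B i₀, u⟫ = 0 := by
  have hperp : ∀ i ≠ i₀, ⟪B i, w⟫ = 0 := fun i hi => by
    have : μ i * ⟪B i, w⟫ = 0 := by
      rw [← real_inner_smul_left, ← hB, hT, hw, inner_zero_right]
    exact (mul_eq_zero.mp this).resolve_left (hμ i hi)
  have hw_eq : w = ⟪B i₀, w⟫ • B i₀ := by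
    conv_lhs => rw [← B.sum_repr' w]
    exact sum_eq_single i₀ (fun i _ hi => by rw [hperp i hi, zero_smul]) (by simp)
  have hcoef : ⟪B i₀, w⟫ ≠ 0 := fun h => hw₀ (by rw [hw_eq, h, zero_smul])
  rw [hw_eq, real_inner_smul_left] at hu
  exact (mul_eq_zero.mp hu).resolve_left hcoef

end Spectral

theorem Matrix.IsHermitian.toEuclideanLin_eigenvectorBasis {ι : Type*} [Fintype ι]
    [DecidableEq ι] {A : Matrix ι ι ℝ} (hA : A.IsHermitian) (i : ι) :
    Matrix.toEuclideanLin A (hA.eigenvectorBasis i) = hA.eigenvalues i • hA.eigenvectorBasis i :=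
  WithLp.ofLp_injective 2 (hA.mulVec_eigenvectorBasis i)

section Graph

variable {V : Type*} [Fintype V] [DecidableEq V]

def centeredIndicator (S : Finset V) : EuclideanSpace ℝ V :=
  WithLp.toLp 2 (fun v => if v ∈ S then 1 else 0) - (#S / Fintype.card V : ℝ) • WithLp.toLp 2 1

theorem inner_centeredIndicator [Nonempty V] (S T : Finset V) :
    ⟪centeredIndicator S, centeredIndicator T⟫ = #(S ∩ T) - #S * #T / Fintype.card V := by
  simp only [centeredIndicator, inner_sub_right, inner_sub_left, EuclideanSpace.inner_toLp_toLp,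
    dotProduct, Pi.star_apply, star_trivial, mul_ite, mul_one, mul_zero, sum_ite_mem, univ_inter,
    sum_const, nsmul_eq_mul, real_inner_smul_left, Pi.one_apply, real_inner_smul_right,
    card_univ]
  field_simp
  ring

theorem inner_one_centeredIndicator [Nonempty V] (S : Finset V) :
    ⟪WithLp.toLp 2 1, centeredIndicator S⟫ = 0 := by
  simp only [centeredIndicator, inner_sub_right, EuclideanSpace.inner_toLp_toLp, dotProduct,
    Pi.star_apply, Pi.one_apply, star_trivial, mul_one, sum_ite_mem, univ_inter, sum_const,
    nsmul_eq_mul, real_inner_smul_right, card_univ]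
  field_simp
  ring

theorem toEuclideanLin_lapMatrix_toLp_one (G : SimpleGraph V) [DecidableRel G.Adj] :
    Matrix.toEuclideanLin (G.lapMatrix ℝ) (WithLp.toLp 2 1) = 0 :=
  congrArg (WithLp.toLp 2) G.lapMatrix_mulVec_const_eq_zero

theorem inner_centeredIndicator_lapMatrix_eq_zero (G : SimpleGraph V) [DecidableRel G.Adj]
    {S T : Finset V} (hST : Disjoint S T) (hadj : ∀ x ∈ S, ∀ y ∈ T, ¬ G.Adj x y) :
    ⟪centeredIndicator S, Matrix.toEuclideanLin (G.lapMatrix ℝ) (centeredIndicator T)⟫ = 0 := by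
  set L := Matrix.toEuclideanLin (G.lapMatrix ℝ)
  have hL : L.IsSymmetric := Matrix.isSymmetric_toEuclideanLin_iff.mpr (G.isHermitian_lapMatrix ℝ)
  have hL1 : L (WithLp.toLp 2 1) = 0 := toEuclideanLin_lapMatrix_toLp_one G
  have hχ : ⟪WithLp.toLp 2 (fun v => if v ∈ S then 1 else 0),
      L (WithLp.toLp 2 (fun v => if v ∈ T then 1 else 0))⟫ = 0 := by
    simp only [L, Matrix.toLpLin_toLp, EuclideanSpace.inner_toLp_toLp, dotProduct]
    refine sum_eq_zero fun v _ => ?_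
    by_cases hv : v ∈ S
    · have : (G.lapMatrix ℝ *ᵥ fun v => if v ∈ T then 1 else 0) v = 0 := by
        rw [G.lapMatrix_mulVec_apply]
        have hnbr : ∀ u ∈ G.neighborFinset v, u ∉ T := fun u hu hu' =>
          hadj v hv u hu' ((G.mem_neighborFinset v u).mp hu)
        simp [disjoint_left.mp hST hv, sum_ite_of_false hnbr]
      simp [this]
    · simp [hv]
  simp only [centeredIndicator, map_sub, map_smul, hL1, smul_zero, sub_zero, inner_sub_left,
    real_inner_smul_left, hχ]
  rw [← hL, hL1, inner_zero_left, mul_zero, sub_zero]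

theorem sq_mul_card_mul_card_le_of_abs_sub_eigenvalues_le (G : SimpleGraph V)
    [DecidableRel G.Adj] {c θ : ℝ} (hθ : 0 ≤ θ) (hθc : θ < c) {i₀ : V}
    (hμ : ∀ i ≠ i₀, |c - (G.isHermitian_lapMatrix ℝ).eigenvalues i| ≤ θ) {S T : Finset V}
    (hST : Disjoint S T) (hadj : ∀ x ∈ S, ∀ y ∈ T, ¬ G.Adj x y) :
    (c * #S * #T) ^ 2
      ≤ θ ^ 2 * (#S * (Fintype.card V - #S)) * (#T * (Fintype.card V - #T)) := by
  have : Nonempty V := ⟨i₀⟩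
  set hL := G.isHermitian_lapMatrix ℝ
  have hB := hL.toEuclideanLin_eigenvectorBasis
  have hμ₀ : ∀ i ≠ i₀, hL.eigenvalues i ≠ 0 := fun i hi h0 => by
    have := hμ i hi
    rw [h0, sub_zero, abs_of_pos (by linarith)] at this
    linarith
  have hone₀ : (WithLp.toLp 2 1 : EuclideanSpace ℝ V) ≠ 0 := fun h => by
    simpa using congrFun (congrArg WithLp.ofLp h) i₀
  have hu := inner_eigenvector_eq_zero_of_inner_ker_eq_zero
    (Matrix.isSymmetric_toEuclideanLin_iff.mpr hL) hB hμ₀ (toEuclideanLin_lapMatrix_toLp_one G)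
    hone₀ (inner_one_centeredIndicator S)
  have hmix := abs_mul_inner_sub_inner_apply_le hB hθ hμ hu (centeredIndicator T)
  rw [inner_centeredIndicator, inner_centeredIndicator_lapMatrix_eq_zero G hST hadj,
    disjoint_iff_inter_eq_empty.mp hST] at hmix
  have hsq := pow_le_pow_left₀ (abs_nonneg _) hmix 2
  rw [sq_abs, mul_pow, mul_pow, ← real_inner_self_eq_norm_sq, ← real_inner_self_eq_norm_sq,
    inner_centeredIndicator, inner_centeredIndicator, inter_self, inter_self, card_empty,
    Nat.cast_zero] at hsq
  field_simp at hsq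
  convert hsq using 1 <;> ring

end Graph

theorem Fin.forall_ne_perm_zero_of_forall_pos {n : ℕ} [NeZero n] (σ : Equiv.Perm (Fin n))
    {p : Fin n → Prop} (h : ∀ j : Fin n, 0 < (j : ℕ) → p (σ j)) : ∀ i ≠ σ 0, p i := by
  intro i hi
  have hj : σ.symm i ≠ 0 := fun h0 => hi (by rw [← h0, Equiv.apply_symm_apply])
  simpa using h (σ.symm i) (Fin.pos_iff_ne_zero.mpr hj)

theorem div_le_div_of_sq_mul_mul_le {d θ x p N : ℝ} (hd : 0 < d) (hx : 0 < x) (hp : 0 < p)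
    (hN : 0 ≤ N) (h : (d * x * p) ^ 2 ≤ θ ^ 2 * (x * (N + p)) * (p * (x + N))) :
    (d ^ 2 - θ ^ 2) / ((x + N + p) * θ ^ 2) ≤ N / (x * p) := by
  have hxp : 0 < x * p := mul_pos hx hp
  have h' : d ^ 2 * (x * p) ≤ θ ^ 2 * ((N + p) * (x + N)) :=
    le_of_mul_le_mul_right (by nlinarith) hxp
  have hθ : 0 < θ ^ 2 :=
    pos_of_mul_pos_left (lt_of_lt_of_le (by positivity) h') (by positivity)
  rw [div_le_div_iff₀ (by positivity) hxp]
  nlinarith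

section ExpandingFactor

variable {n : ℕ} (G : SimpleGraph (Fin n)) [DecidableRel G.Adj] (X : Finset (Fin n))

theorem disjoint_plusSet : Disjoint X (plusSet G X) := by
  rw [plusSet]
  exact disjoint_sdiff.mono_left subset_union_left

theorem not_adj_of_mem_plusSet {x y : Fin n} (hx : x ∈ X) (hy : y ∈ plusSet G X) :
    ¬ G.Adj x y := fun hxy => by
  simp only [plusSet, nbr, mem_sdiff, mem_union, mem_filter, mem_univ, true_and] at hy
  exact hy (Or.inr ⟨fun hyX => hy (Or.inl hyX), x, hx, hxy⟩)

theorem card_add_card_nbr_add_card_plusSet : #X + #(nbr G X) + #(plusSet G X) = n := by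
  have hdisj : Disjoint X (nbr G X) := disjoint_right.mpr fun y hy => (mem_filter.mp hy).2.1
  rw [plusSet, card_sdiff_of_subset (subset_univ _), card_univ, Fintype.card_fin,
    ← card_union_of_disjoint hdisj]
  have := card_le_univ (X ∪ nbr G X)
  rw [Fintype.card_fin] at this
  omega

end ExpandingFactor

theorem expanding_factor_lower_bound {n : ℕ} (G : SimpleGraph (Fin n))
    [DecidableRel G.Adj] (θ : ℝ) (hθd : θ < avgDeg G)
    (hθ : ∀ i : Fin n, 0 < (i : ℕ) →
    |avgDeg G - lapEig G i| ≤ θ) :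
    ∀ X : Finset (Fin n), 1 ≤ X.card → X.card ≤ n - 1 → 1 ≤ (plusSet G X).card →
      (avgDeg G ^ 2 - θ ^ 2) / (n * θ ^ 2)
        ≤ ((nbr G X).card : ℝ) / (X.card * (plusSet G X).card) := by
  intro X hX _ hP
  have hcard := card_add_card_nbr_add_card_plusSet G X
  have : NeZero n := ⟨by omega⟩
  have hθ₀ : 0 ≤ θ := (abs_nonneg _).trans (hθ ⟨1, by omega⟩ one_pos)
  have hμ := Fin.forall_ne_perm_zero_of_forall_pos
    (p := fun i => |avgDeg G - (G.isHermitian_lapMatrix ℝ).eigenvalues i| ≤ θ) (Tuple.sort _) hθ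
  have hmix := sq_mul_card_mul_card_le_of_abs_sub_eigenvalues_le G hθ₀ hθd hμ
    (disjoint_plusSet G X) fun x hx y hy => not_adj_of_mem_plusSet G X hx hy
  have hn : (n : ℝ) = #X + #(nbr G X) + #(plusSet G X) := by exact_mod_cast hcard.symm
  rw [Fintype.card_fin, hn] at hmix
  rw [hn]
  exact div_le_div_of_sq_mul_mul_le (hθ₀.trans_lt hθd) (by positivity) (by positivity)
    (by positivity) (by convert hmix using 2 <;> ring)
end
end

section
/- Let G be a simple graph on n vertices with average degree d = vol(G)/n. Suppose |d − σ_i| ≤ θ for all nonzero Laplacian eigenvalues σ_i. Then for any two subsets X, Y ⊆ V(G): |e(X,Y) − (d/n)|X||Y| + d|X∩Y| − vol(X∩Y)| ≤ (θ/n)·√(|X|(n−|X|)|Y|(n−|Y|)). -/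
open Finset

noncomputable section

/-- `e(X, Y)`: the number of ordered pairs `(x, y)` with `x ∈ X`, `y ∈ Y` adjacent. -/
def eOrd {n : ℕ} (G : SimpleGraph (Fin n)) [DecidableRel G.Adj]
    (X Y : Finset (Fin n)) : ℕ :=
  ((X ×ˢ Y).filter fun p => G.Adj p.1 p.2).card

/-!
Write `x = 1_X - (|X|/n) 1` and `y = 1_Y - (|Y|/n) 1`. Since `L 1 = 0`, the discrepancy equals
`⟪x, (d - L) y⟫`, and `‖x‖² = |X| (n - |X|) / n`. In an orthonormal eigenbasis of `L` this is
`∑ (d - σᵢ) xᵢ yᵢ`, so Cauchy–Schwarz bounds it by `θ ‖x‖ ‖y‖` as soon as every coordinate with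
`|d - σᵢ| > θ` vanishes. The only candidate is the bottom eigenvalue `σ₀ = 0`, and then `|d| > θ`
forces all other eigenvalues to be nonzero: the kernel of `L` is spanned by `1`, which is
orthogonal to `x`.
-/

open Matrix
open scoped RealInnerProductSpace

namespace OrthonormalBasis

variable {ι E : Type*} [Fintype ι] [NormedAddCommGroup E] [InnerProductSpace ℝ E]

lemma eq_zero_of_forall_inner_eq_zero (b : OrthonormalBasis ι ℝ E) {x : E}
    (hx : ∀ i, ⟪b i, x⟫ = 0) : x = 0 := by
  rw [← b.sum_repr' x]
  simp [hx]

lemma sum_abs_inner_mul_abs_inner_le (b : OrthonormalBasis ι ℝ E) (x y : E) :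
    ∑ i, |⟪b i, x⟫| * |⟪b i, y⟫| ≤ ‖x‖ * ‖y‖ :=
  (Real.sum_mul_le_sqrt_mul_sqrt _ _ _).trans_eq <| by
    simp only [sq_abs, b.sum_sq_inner_right, Real.sqrt_sq (norm_nonneg _)]

end OrthonormalBasis

namespace Matrix.IsHermitian

variable {ι : Type*} [Fintype ι] [DecidableEq ι] {A : Matrix ι ι ℝ} (hA : A.IsHermitian)

lemma toEuclideanLin_eigenvectorBasis_s16 (i : ι) :
    toEuclideanLin A (hA.eigenvectorBasis i) = hA.eigenvalues i • hA.eigenvectorBasis i := by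
  ext j
  simp [toLpLin_apply, hA.mulVec_eigenvectorBasis]

lemma inner_eigenvectorBasis_toEuclideanLin (i : ι) (y : EuclideanSpace ℝ ι) :
    ⟪hA.eigenvectorBasis i, toEuclideanLin A y⟫ =
      hA.eigenvalues i * ⟪hA.eigenvectorBasis i, y⟫ := by
  rw [← isSymmetric_toEuclideanLin_iff.mpr hA, toEuclideanLin_eigenvectorBasis_s16,
    real_inner_smul_left]

lemma inner_toEuclideanLin_eq_sum (x y : EuclideanSpace ℝ ι) :
    ⟪x, toEuclideanLin A y⟫ =
      ∑ i, hA.eigenvalues i * (⟪hA.eigenvectorBasis i, x⟫ * ⟪hA.eigenvectorBasis i, y⟫) := by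
  rw [← hA.eigenvectorBasis.sum_inner_mul_inner]
  refine Finset.sum_congr rfl fun i _ => ?_
  rw [inner_eigenvectorBasis_toEuclideanLin, real_inner_comm x]
  ring

lemma abs_mul_inner_sub_inner_toEuclideanLin_le (c θ : ℝ) (x y : EuclideanSpace ℝ ι)
    (h : ∀ i, |c - hA.eigenvalues i| ≤ θ ∨ ⟪hA.eigenvectorBasis i, x⟫ = 0) :
    |c * ⟪x, y⟫ - ⟪x, toEuclideanLin A y⟫| ≤ θ * (‖x‖ * ‖y‖) := by
  set b := hA.eigenvectorBasis
  rcases lt_or_ge θ 0 with hθ | hθ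
  · have hx : x = 0 := b.eq_zero_of_forall_inner_eq_zero fun i =>
      (h i).resolve_left fun hi => (abs_nonneg _).trans hi |>.not_gt hθ
    simp [hx]
  have hterm : ∀ i, |(c - hA.eigenvalues i) * (⟪b i, x⟫ * ⟪b i, y⟫)| ≤
      θ * (|⟪b i, x⟫| * |⟪b i, y⟫|) := fun i => by
    rw [abs_mul, abs_mul]
    rcases h i with hi | hi
    · exact mul_le_mul_of_nonneg_right hi (by positivity)
    · simp [hi]
  calc |c * ⟪x, y⟫ - ⟪x, toEuclideanLin A y⟫|
      = |∑ i, (c - hA.eigenvalues i) * (⟪b i, x⟫ * ⟪b i, y⟫)| := by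
        rw [hA.inner_toEuclideanLin_eq_sum, ← b.sum_inner_mul_inner, Finset.mul_sum,
          ← Finset.sum_sub_distrib]
        congr 1
        refine Finset.sum_congr rfl fun i _ => ?_
        rw [real_inner_comm x]
        ring
    _ ≤ ∑ i, θ * (|⟪b i, x⟫| * |⟪b i, y⟫|) :=
        (Finset.abs_sum_le_sum_abs _ _).trans (Finset.sum_le_sum fun i _ => hterm i)
    _ ≤ θ * (‖x‖ * ‖y‖) := by
        rw [← Finset.mul_sum]
        exact mul_le_mul_of_nonneg_left (b.sum_abs_inner_mul_abs_inner_le x y) hθ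

lemma inner_eigenvectorBasis_eq_zero_of_toEuclideanLin_eq_zero {u : EuclideanSpace ℝ ι}
    (hu : toEuclideanLin A u = 0) {i : ι} (hi : hA.eigenvalues i ≠ 0) :
    ⟪hA.eigenvectorBasis i, u⟫ = 0 := by
  have := hA.inner_eigenvectorBasis_toEuclideanLin i u
  rw [hu, inner_zero_right, eq_comm, mul_eq_zero] at this
  exact this.resolve_left hi

lemma inner_eigenvectorBasis_eq_zero_of_inner_eq_zero {u x : EuclideanSpace ℝ ι}
    (hu : toEuclideanLin A u = 0) (hu₀ : u ≠ 0) {i₀ : ι}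
    (hμ : ∀ i ≠ i₀, hA.eigenvalues i ≠ 0) (hx : ⟪u, x⟫ = 0) :
    ⟪hA.eigenvectorBasis i₀, x⟫ = 0 := by
  set b := hA.eigenvectorBasis
  have hcoord : ∀ i ≠ i₀, ⟪b i, u⟫ = 0 := fun i hi =>
    hA.inner_eigenvectorBasis_eq_zero_of_toEuclideanLin_eq_zero hu (hμ i hi)
  have hu_i₀ : ⟪b i₀, u⟫ ≠ 0 := fun h => hu₀ <| b.eq_zero_of_forall_inner_eq_zero fun i => by
    by_cases hi : i = i₀
    · rwa [hi]
    · exact hcoord i hi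
  rw [← b.sum_inner_mul_inner, Finset.sum_eq_single i₀ (fun i _ hi => by
    rw [real_inner_comm, hcoord i hi, zero_mul]) (by simp), real_inner_comm] at hx
  exact (mul_eq_zero.mp hx).resolve_left hu_i₀

end Matrix.IsHermitian

section IndicatorVec

variable {V : Type*} [Fintype V]

lemma card_div_card_mul_card (S : Finset V) :
    (#S / Fintype.card V : ℝ) * Fintype.card V = #S :=
  div_mul_cancel_of_imp fun h => by
    have h' : Fintype.card V = 0 := by exact_mod_cast h
    exact_mod_cast Nat.eq_zero_of_le_zero (h' ▸ S.card_le_univ)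

variable [DecidableEq V]

def indicatorVec (S : Finset V) : EuclideanSpace ℝ V :=
  WithLp.toLp 2 fun v => if v ∈ S then 1 else 0

def centeredIndicatorVec (S : Finset V) : EuclideanSpace ℝ V :=
  indicatorVec S - (#S / Fintype.card V : ℝ) • indicatorVec univ

lemma inner_indicatorVec (S T : Finset V) :
    ⟪indicatorVec S, indicatorVec T⟫ = #(S ∩ T) := by
  simp [indicatorVec, EuclideanSpace.inner_toLp_toLp, dotProduct, Finset.sum_ite_mem]

lemma inner_centeredIndicatorVec (S T : Finset V) :
    ⟪centeredIndicatorVec S, centeredIndicatorVec T⟫ =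
      #(S ∩ T) - #S * #T / Fintype.card V := by
  simp only [centeredIndicatorVec, inner_sub_left, inner_sub_right, real_inner_smul_left,
    real_inner_smul_right, inner_indicatorVec, inter_univ, univ_inter, card_univ,
    card_div_card_mul_card]
  ring

lemma inner_indicatorVec_univ_centeredIndicatorVec (S : Finset V) :
    ⟪indicatorVec univ, centeredIndicatorVec S⟫ = 0 := by
  simp only [centeredIndicatorVec, inner_sub_right, real_inner_smul_right, inner_indicatorVec,
    univ_inter, card_univ, card_div_card_mul_card, sub_self]

lemma indicatorVec_univ_ne_zero [Nonempty V] : indicatorVec (univ : Finset V) ≠ 0 := fun h => by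
  have := inner_indicatorVec (univ : Finset V) univ
  rw [h, inner_zero_left, inter_self, card_univ] at this
  exact Fintype.card_ne_zero (by exact_mod_cast this.symm)

lemma inner_indicatorVec_toEuclideanLin (M : Matrix V V ℝ) (S T : Finset V) :
    ⟪indicatorVec S, toEuclideanLin M (indicatorVec T)⟫ = ∑ v ∈ S, ∑ w ∈ T, M v w := by
  simp [indicatorVec, EuclideanSpace.inner_toLp_toLp, toLpLin_toLp, dotProduct, mulVec]

lemma norm_centeredIndicatorVec_sq (S : Finset V) :
    ‖centeredIndicatorVec S‖ ^ 2 = #S * (Fintype.card V - #S) / Fintype.card V := by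
  rw [← real_inner_self_eq_norm_sq, inner_centeredIndicatorVec, inter_self]
  linear_combination -card_div_card_mul_card S

lemma norm_mul_norm_centeredIndicatorVec (S T : Finset V) :
    ‖centeredIndicatorVec S‖ * ‖centeredIndicatorVec T‖ =
      √(#S * (Fintype.card V - #S) * #T * (Fintype.card V - #T)) / Fintype.card V := calc
  _ = √(‖centeredIndicatorVec S‖ ^ 2 * ‖centeredIndicatorVec T‖ ^ 2) := by
    rw [Real.sqrt_mul (sq_nonneg _), Real.sqrt_sq (norm_nonneg _), Real.sqrt_sq (norm_nonneg _)]
  _ = √(#S * (Fintype.card V - #S) * #T * (Fintype.card V - #T) / Fintype.card V ^ 2) := by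
    rw [norm_centeredIndicatorVec_sq, norm_centeredIndicatorVec_sq]
    ring_nf
  _ = _ := by rw [Real.sqrt_div' _ (sq_nonneg _), Real.sqrt_sq (Nat.cast_nonneg _)]

end IndicatorVec

namespace SimpleGraph

section

variable {V : Type*} [Fintype V] [DecidableEq V] (G : SimpleGraph V) [DecidableRel G.Adj]

lemma toEuclideanLin_lapMatrix_indicatorVec_univ :
    toEuclideanLin (G.lapMatrix ℝ) (indicatorVec univ) = 0 := by
  ext v
  simp [indicatorVec, toLpLin_toLp, lapMatrix_mulVec_const_eq_zero]

lemma inner_centeredIndicatorVec_lapMatrix (S T : Finset V) :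
    ⟪centeredIndicatorVec S, toEuclideanLin (G.lapMatrix ℝ) (centeredIndicatorVec T)⟫ =
      ⟪indicatorVec S, toEuclideanLin (G.lapMatrix ℝ) (indicatorVec T)⟫ := by
  have hsymm := isSymmetric_toEuclideanLin_iff.mpr (G.isHermitian_lapMatrix ℝ)
  rw [centeredIndicatorVec, centeredIndicatorVec, map_sub, map_smul,
    toEuclideanLin_lapMatrix_indicatorVec_univ, smul_zero, sub_zero, inner_sub_left,
    real_inner_smul_left, ← hsymm (indicatorVec univ), toEuclideanLin_lapMatrix_indicatorVec_univ,
    inner_zero_left, mul_zero, sub_zero]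

end

section

variable {n : ℕ} (G : SimpleGraph (Fin n)) [DecidableRel G.Adj]

lemma inner_indicatorVec_lapMatrix (X Y : Finset (Fin n)) :
    ⟪indicatorVec X, toEuclideanLin (G.lapMatrix ℝ) (indicatorVec Y)⟫ =
      ∑ v ∈ X ∩ Y, (G.degree v : ℝ) - eOrd G X Y := by
  rw [inner_indicatorVec_toEuclideanLin, eOrd, card_filter, sum_product]
  push_cast
  simp only [lapMatrix, degMatrix, Matrix.sub_apply, sum_sub_distrib, diagonal_apply, sum_ite_eq,
    sum_ite_mem, adjMatrix_apply]

lemma lapEig_sort_symm (i : Fin n) :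
    lapEig G ((Tuple.sort (G.isHermitian_lapMatrix ℝ).eigenvalues).symm i) =
      (G.isHermitian_lapMatrix ℝ).eigenvalues i := by
  simp [lapEig]

lemma monotone_lapEig : Monotone (lapEig G) :=
  Tuple.monotone_sort _

lemma lapEig_zero [NeZero n] : lapEig G 0 = 0 := by
  have hL := G.isHermitian_lapMatrix ℝ
  obtain ⟨j, -, hj⟩ := Finset.prod_eq_zero_iff.mp <| by
    simpa [hL.det_eq_prod_eigenvalues] using G.det_lapMatrix_eq_zero
  refine le_antisymm ?_ ((G.posSemidef_lapMatrix ℝ).eigenvalues_nonneg _)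
  calc lapEig G 0 ≤ lapEig G ((Tuple.sort hL.eigenvalues).symm j) :=
        G.monotone_lapEig (Fin.zero_le _)
    _ = 0 := by rw [lapEig_sort_symm]; exact hj

lemma abs_sub_eigenvalues_le_or_inner_eq_zero {c θ : ℝ}
    (hθ : ∀ i : Fin n, 0 < (i : ℕ) → |c - lapEig G i| ≤ θ) {x : EuclideanSpace ℝ (Fin n)}
    (hx : ⟪indicatorVec univ, x⟫ = 0) (i : Fin n) :
    |c - (G.isHermitian_lapMatrix ℝ).eigenvalues i| ≤ θ ∨
      ⟪(G.isHermitian_lapMatrix ℝ).eigenvectorBasis i, x⟫ = 0 := by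
  have : NeZero n := ⟨i.pos.ne'⟩
  set hL := G.isHermitian_lapMatrix ℝ
  set π := Tuple.sort hL.eigenvalues
  have hbound : ∀ j ≠ π 0, |c - hL.eigenvalues j| ≤ θ := fun j hj => by
    rw [← lapEig_sort_symm]
    refine hθ _ (Fin.pos_iff_ne_zero.mpr fun h => hj ?_)
    rw [← h, Equiv.apply_symm_apply]
  rcases ne_or_eq i (π 0) with hi | rfl
  · exact .inl (hbound i hi)
  have hμ₀ : hL.eigenvalues (π 0) = 0 := G.lapEig_zero
  by_cases hc : |c| ≤ θ
  · left
    rwa [hμ₀, sub_zero]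
  refine .inr <| hL.inner_eigenvectorBasis_eq_zero_of_inner_eq_zero
    G.toEuclideanLin_lapMatrix_indicatorVec_univ indicatorVec_univ_ne_zero
    (fun j hj hj₀ => hc ?_) hx
  simpa [hj₀] using hbound j hj

end

end SimpleGraph

theorem discrepancy_inequality {n : ℕ} (G : SimpleGraph (Fin n)) [DecidableRel G.Adj]
    (θ : ℝ)
    (hθ : ∀ i : Fin n, 0 < (i : ℕ) → |avgDeg G - lapEig G i| ≤ θ)
    (X Y : Finset (Fin n)) :
    |(eOrd G X Y : ℝ) - avgDeg G / n * X.card * Y.card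
        + avgDeg G * (X ∩ Y).card - ∑ v ∈ X ∩ Y, (G.degree v : ℝ)|
      ≤ θ / n * Real.sqrt (X.card * (n - X.card) * Y.card * (n - Y.card)) := by
  set x := centeredIndicatorVec X
  set y := centeredIndicatorVec Y
  have hquantity : (eOrd G X Y : ℝ) - avgDeg G / n * X.card * Y.card
        + avgDeg G * (X ∩ Y).card - ∑ v ∈ X ∩ Y, (G.degree v : ℝ) =
      avgDeg G * ⟪x, y⟫ - ⟪x, toEuclideanLin (G.lapMatrix ℝ) y⟫ := by
    rw [inner_centeredIndicatorVec, G.inner_centeredIndicatorVec_lapMatrix,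
      G.inner_indicatorVec_lapMatrix, Fintype.card_fin]
    ring
  have hnorm : θ / n * √(X.card * (n - X.card) * Y.card * (n - Y.card)) =
      θ * (‖x‖ * ‖y‖) := by
    rw [norm_mul_norm_centeredIndicatorVec, Fintype.card_fin]
    ring
  rw [hquantity, hnorm]
  exact (G.isHermitian_lapMatrix ℝ).abs_mul_inner_sub_inner_toEuclideanLin_le _ _ _ _
    (G.abs_sub_eigenvalues_le_or_inner_eq_zero hθ (inner_indicatorVec_univ_centeredIndicatorVec X))
end
end
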